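/- Let f(x) = Σ_{n=0}^N a_n x^n + a x^α for x > 0, where N < α < N+1 and a ≠ 0. Then the LFD of f at 0 of order α exists and equals a·Γ(α+1), the LFD of order q equals 0 for N < q < α, and the LFD of order q does not exist for α < q < N+1. -/

import Mathlib

open Real Filter Set Topology Asymptotics

/-- Riemann-Liouville fractional derivative of order `q ∈ (N, N+1)` with lower limit `a`:
`(1/Γ(N+1-q)) (d/dx)^{N+1} ∫_a^x f(y)/(x-y)^{q-N} dy`. -/
noncomputable def rlDerivN (q a : ℝ) (N : ℕ) (f : ℝ → ℝ) (x : ℝ) : ℝ :=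
  (1 / Real.Gamma (N + 1 - q)) *
    iteratedDeriv (N + 1) (fun t => ∫ y in a..t, f y / (t - y) ^ (q - N)) x

/-- The local fractional derivative of order `q ∈ (N, N+1)` of `f` at `y` exists and equals `L`:
the Riemann-Liouville derivative (lower limit `y`) of `f` minus its degree-`N` Taylor
polynomial at `y` tends to `L` as `x → y⁺`. -/
def HasLFDgen (f : ℝ → ℝ) (q y : ℝ) (N : ℕ) (L : ℝ) : Prop :=
  Tendsto (fun x => rlDerivN q y N
      (fun u => f u - ∑ n ∈ Finset.range (N + 1),
        iteratedDeriv n f y / Real.Gamma (n + 1) * (u - y) ^ n) x)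
    (𝓝[>] y) (𝓝 L)

/-!
Since `α > N`, the function `x ^ α` is `N` times differentiable at `0` with all these derivatives
vanishing there, so subtracting the Taylor polynomial of order `N` leaves exactly `A x ^ α`.
By the Beta integral, the Riemann–Liouville integral of `A y ^ α` is a multiple of
`t ^ (α + N + 1 - q)`, and differentiating `N + 1` times gives the power rule
`A Γ(α + 1) / Γ(α + 1 - q) x ^ (α - q)`. As `x → 0⁺` this is constant for `q = α`, tends to `0`
for `q < α`, and blows up for `q > α` because `A ≠ 0`.
-/

open scoped Nat

theorem descPochhammer_eval_mul_Gamma {γ : ℝ} {n : ℕ} (h : (n : ℝ) < γ + 1) :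
    (descPochhammer ℝ n).eval γ * Gamma (γ + 1 - n) = Gamma (γ + 1) := by
  induction n with
  | zero => simp
  | succ n ih =>
    push_cast at h
    have hpos : γ - n ≠ 0 := by linarith
    rw [descPochhammer_succ_right, Polynomial.eval_mul, mul_assoc, ← ih (by linarith)]
    simp only [Polynomial.eval_sub, Polynomial.eval_X, Polynomial.eval_natCast]
    rw [show γ + 1 - (n : ℝ) = (γ - n) + 1 by ring, Gamma_add_one hpos]
    push_cast
    ring_nf

theorem integral_rpow_mul_sub_rpow {u v t : ℝ} (hu : 0 < u) (hv : 0 < v) (ht : 0 < t) :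
    ∫ y in (0 : ℝ)..t, y ^ (u - 1) * (t - y) ^ (v - 1) =
      Gamma u * Gamma v / Gamma (u + v) * t ^ (u + v - 1) := by
  apply Complex.ofReal_injective
  have hΓ : Complex.Gamma (u + v) ≠ 0 := by
    rw [← Complex.ofReal_add, Complex.Gamma_ofReal]
    exact_mod_cast (Gamma_pos_of_pos (add_pos hu hv)).ne'
  have hB := Complex.Gamma_mul_Gamma_eq_betaIntegral (s := u) (t := v) (by simpa) (by simpa)
  rw [← intervalIntegral.integral_ofReal]
  have hcongr : ∀ y ∈ uIcc 0 t, ((y ^ (u - 1) * (t - y) ^ (v - 1) : ℝ) : ℂ) =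
      (y : ℂ) ^ ((u : ℂ) - 1) * ((t : ℂ) - y) ^ ((v : ℂ) - 1) := by
    intro y hy
    rw [uIcc_of_le ht.le] at hy
    rw [Complex.ofReal_mul, Complex.ofReal_cpow hy.1, Complex.ofReal_cpow (by linarith [hy.2])]
    push_cast
    rfl
  rw [intervalIntegral.integral_congr hcongr, Complex.betaIntegral_scaled _ _ ht,
    Complex.ofReal_mul, Complex.ofReal_cpow ht.le, Complex.ofReal_div, Complex.ofReal_mul,
    ← Complex.Gamma_ofReal, ← Complex.Gamma_ofReal, ← Complex.Gamma_ofReal, hB]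
  push_cast
  field_simp

theorem rlDerivN_const_mul_rpow (c : ℝ) {β q : ℝ} {N : ℕ} (hβ : -1 < β) (hqN : q < N + 1)
    (hqβ : q < β + 1) {x : ℝ} (hx : 0 < x) :
    rlDerivN q 0 N (fun u => c * u ^ β) x =
      c * Gamma (β + 1) / Gamma (β + 1 - q) * x ^ (β - q) := by
  set γ := β + N + 1 - q with hγ
  have hintegral : ∀ t > 0, ∫ y in (0 : ℝ)..t, c * y ^ β / (t - y) ^ (q - N) =
      c * (Gamma (β + 1) * Gamma (N + 1 - q) / Gamma (γ + 1)) * t ^ γ := by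
    intro t ht
    have hcongr : ∀ y ∈ uIcc 0 t, c * y ^ β / (t - y) ^ (q - N) =
        c * (y ^ ((β + 1) - 1) * (t - y) ^ ((N + 1 - q) - 1)) := by
      intro y hy
      rw [uIcc_of_le ht.le] at hy
      rw [show (N + 1 - q) - 1 = -(q - N) by ring, rpow_neg (by linarith [hy.2]),
        add_sub_cancel_right]
      ring
    rw [intervalIntegral.integral_congr hcongr, intervalIntegral.integral_const_mul,
      integral_rpow_mul_sub_rpow (by linarith) (by linarith) ht,
      show β + 1 + (N + 1 - q) = γ + 1 by ring, add_sub_cancel_right, mul_assoc]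
  have hPochhammer := descPochhammer_eval_mul_Gamma (γ := γ) (n := N + 1) (by push_cast; linarith)
  have hΓ₁ : Gamma (β + 1 - q) ≠ 0 := (Gamma_pos_of_pos (by linarith)).ne'
  have hΓ₂ : Gamma (N + 1 - q) ≠ 0 := (Gamma_pos_of_pos (by linarith)).ne'
  have hΓ₃ : Gamma (γ + 1) ≠ 0 := (Gamma_pos_of_pos (by linarith)).ne'
  rw [show γ + 1 - ((N + 1 : ℕ) : ℝ) = β + 1 - q by push_cast; ring] at hPochhammer
  have hev : (fun t => ∫ y in (0 : ℝ)..t, c * y ^ β / (t - y) ^ (q - N)) =ᶠ[𝓝 x]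
      fun t => c * (Gamma (β + 1) * Gamma (N + 1 - q) / Gamma (γ + 1)) * t ^ γ :=
    eventually_gt_nhds hx |>.mono hintegral
  rw [rlDerivN, hev.iteratedDeriv_eq, iteratedDeriv_const_mul_field, iteratedDeriv_eq_iterate,
    iter_deriv_rpow_const, show γ - ((N + 1 : ℕ) : ℝ) = β - q by push_cast; ring,
    eq_div_of_mul_eq hΓ₁ hPochhammer]
  field_simp

theorem iteratedDeriv_rpow_const_zero {p : ℝ} {k : ℕ} (hk : (k : ℝ) < p) :
    iteratedDeriv k (fun x : ℝ => x ^ p) 0 = 0 := by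
  rw [iteratedDeriv_eq_iterate, iter_deriv_rpow_const, zero_rpow (by linarith), mul_zero]

theorem iteratedDeriv_sum_monomial_zero (a : ℕ → ℝ) {N k : ℕ} (hk : k ≤ N) :
    iteratedDeriv k (fun x : ℝ => ∑ n ∈ Finset.range (N + 1), a n * x ^ n) 0 = (k ! : ℝ) * a k := by
  rw [iteratedDeriv_fun_sum (fun n _ => by fun_prop)]
  simp_rw [iteratedDeriv_const_mul_field, iteratedDeriv_fun_pow_zero]
  simp [Finset.sum_ite_eq, Nat.lt_succ_of_le hk, mul_comm]

theorem iteratedDeriv_sum_monomial_add_rpow_zero (a : ℕ → ℝ) (A : ℝ) {N k : ℕ} {α : ℝ}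
    (hα : (N : ℝ) < α) (hk : k ≤ N) :
    iteratedDeriv k (fun x : ℝ => (∑ n ∈ Finset.range (N + 1), a n * x ^ n) + A * x ^ α) 0 =
      (k ! : ℝ) * a k := by
  have hkα : (k : ℝ) < α := lt_of_le_of_lt (by exact_mod_cast hk) hα
  rw [iteratedDeriv_fun_add (by fun_prop)
      (contDiffAt_const.mul (contDiffAt_rpow_const_of_le hkα.le)),
    iteratedDeriv_sum_monomial_zero a hk, iteratedDeriv_const_mul_field,
    iteratedDeriv_rpow_const_zero hkα, mul_zero, add_zero]

theorem taylorRemainder_sum_monomial_add_rpow (a : ℕ → ℝ) (A : ℝ) {N : ℕ} {α : ℝ}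
    (hα : (N : ℝ) < α) :
    (fun u => (∑ n ∈ Finset.range (N + 1), a n * u ^ n) + A * u ^ α -
      ∑ n ∈ Finset.range (N + 1),
        iteratedDeriv n (fun x : ℝ => (∑ m ∈ Finset.range (N + 1), a m * x ^ m) + A * x ^ α) 0 /
          Gamma (n + 1) * (u - 0) ^ n) = fun u => A * u ^ α := by
  funext u
  have hcoeff : ∀ n ∈ Finset.range (N + 1),
      iteratedDeriv n (fun x : ℝ => (∑ m ∈ Finset.range (N + 1), a m * x ^ m) + A * x ^ α) 0 /
        Gamma (n + 1) * (u - 0) ^ n = a n * u ^ n := by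
    intro n hn
    rw [iteratedDeriv_sum_monomial_add_rpow_zero a A hα (Nat.le_of_lt_succ (Finset.mem_range.1 hn)),
      Gamma_nat_eq_factorial, sub_zero, mul_div_cancel_left₀ _ (by positivity)]
  rw [Finset.sum_congr rfl hcoeff, add_sub_cancel_left]

theorem hasLFDgen_sum_monomial_add_rpow_iff (a : ℕ → ℝ) (A : ℝ) {N : ℕ} {α q L : ℝ}
    (hα : (N : ℝ) < α) (hq : q < N + 1) :
    HasLFDgen (fun x : ℝ => (∑ n ∈ Finset.range (N + 1), a n * x ^ n) + A * x ^ α) q 0 N L ↔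
      Tendsto (fun x => A * Gamma (α + 1) / Gamma (α + 1 - q) * x ^ (α - q)) (𝓝[>] 0) (𝓝 L) := by
  rw [HasLFDgen, taylorRemainder_sum_monomial_add_rpow a A hα]
  refine tendsto_congr' (eventually_nhdsWithin_of_forall fun x hx => ?_)
  exact rlDerivN_const_mul_rpow A (by linarith [(N.cast_nonneg : (0 : ℝ) ≤ N)]) hq (by linarith) hx

theorem stmt14 (N : ℕ) (a : ℕ → ℝ) (A α : ℝ) (hA : A ≠ 0)
    (hα : (N : ℝ) < α) (hα' : α < N + 1) :
    HasLFDgen (fun x : ℝ => (∑ n ∈ Finset.range (N + 1), a n * x ^ n) + A * x ^ α)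
      α 0 N (A * Real.Gamma (α + 1)) ∧
    (∀ q : ℝ, (N : ℝ) < q → q < α →
      HasLFDgen (fun x : ℝ => (∑ n ∈ Finset.range (N + 1), a n * x ^ n) + A * x ^ α)
        q 0 N 0) ∧
    (∀ q : ℝ, α < q → q < N + 1 →
      ¬ ∃ L, HasLFDgen (fun x : ℝ => (∑ n ∈ Finset.range (N + 1), a n * x ^ n) + A * x ^ α)
        q 0 N L) := by
  refine ⟨?_, fun q _ hqα => ?_, fun q hαq hqN => ?_⟩
  · rw [hasLFDgen_sum_monomial_add_rpow_iff a A hα hα']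
    simp
  · rw [hasLFDgen_sum_monomial_add_rpow_iff a A hα (by linarith)]
    have hpow : Tendsto (fun x : ℝ => x ^ (α - q)) (𝓝[>] 0) (𝓝 0) := by
      simpa [zero_rpow (sub_pos.2 hqα).ne'] using
        ((continuous_rpow_const (sub_pos.2 hqα).le).tendsto 0).mono_left nhdsWithin_le_nhds
    simpa using hpow.const_mul (A * Gamma (α + 1) / Gamma (α + 1 - q))
  · rintro ⟨L, hL⟩
    rw [hasLFDgen_sum_monomial_add_rpow_iff a A hα hqN] at hL
    have hC : A * Gamma (α + 1) / Gamma (α + 1 - q) ≠ 0 :=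
      div_ne_zero (mul_ne_zero hA (Gamma_pos_of_pos (by linarith)).ne')
        (Gamma_pos_of_pos (by linarith)).ne'
    refine not_tendsto_nhds_of_tendsto_atTop (tendsto_rpow_neg_nhdsGT_zero (sub_neg.2 hαq)) _
      ((hL.const_mul (A * Gamma (α + 1) / Gamma (α + 1 - q))⁻¹).congr fun x => ?_)
    rw [← mul_assoc, inv_mul_cancel₀ hC, one_mul]
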